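/- arXiv:2510.00649 — 2 statements merged into one kernel-verified Lean document; each statement's English description precedes it below -/
import Mathlib

section
/- Let T̃ and G be unitary complex n×n matrices, let E = R(G) − R(T̃), let α = Re((1/n)·Tr(T̃†G)) and β = Im((1/n)·Tr(T̃†G)), and define the phase-invariant fidelity F = α² + β² = (1/n²)·|Tr(T̃†G)|². Then F ≥ (1 − ‖E‖_F²/(4n))², with equality if and only if β = 0. -/
/-!
The real block encoding turns the complex Frobenius pairing into a real one,
`Tr(R(A) R(B)ᵀ) = 2 Re Tr(A†B)`, so for unitary `T̃, G` one gets
`‖R(G) - R(T̃)‖_F² = 2 ‖G - T̃‖_F² = 4n - 4n α`. Hence `1 - ‖E‖_F²/(4n) = α`, and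
`F = α² + β² ≥ α²` with equality exactly when `β = 0`.
-/

open Matrix

/-- The real block encoding of a complex `n × n` matrix: the `2 × 2` block
indexed by `(i, j)` is `[[Re A_ij, -Im A_ij], [Im A_ij, Re A_ij]]`. -/
def blockEnc {n : ℕ} (A : Matrix (Fin n) (Fin n) ℂ) :
    Matrix (Fin n × Fin 2) (Fin n × Fin 2) ℝ :=
  fun p q =>
    !![(A p.1 q.1).re, -(A p.1 q.1).im; (A p.1 q.1).im, (A p.1 q.1).re] p.2 q.2

theorem blockEnc_sub {n : ℕ} (A B : Matrix (Fin n) (Fin n) ℂ) :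
    blockEnc (A - B) = blockEnc A - blockEnc B := by
  ext ⟨i, a⟩ ⟨j, b⟩
  fin_cases a <;> fin_cases b <;> simp [blockEnc]; ring

theorem trace_blockEnc_mul_transpose {n : ℕ} (A B : Matrix (Fin n) (Fin n) ℂ) :
    (blockEnc A * (blockEnc B)ᵀ).trace = 2 * (Aᴴ * B).trace.re := by
  simp only [trace, diag, mul_apply, transpose_apply, Fintype.sum_prod_type, Fin.sum_univ_two,
    blockEnc, conjTranspose_apply, Complex.re_sum, Complex.mul_re, Complex.star_def,
    Complex.conj_re, Complex.conj_im, Finset.mul_sum]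
  rw [Finset.sum_comm]
  refine Finset.sum_congr rfl fun i _ => ?_
  rw [← Finset.sum_add_distrib]
  refine Finset.sum_congr rfl fun j _ => ?_
  simp only [Fin.isValue, of_apply, cons_val', cons_val_zero, cons_val_fin_one, cons_val_one,
    mul_neg, neg_mul, neg_neg, sub_neg_eq_add]
  ring

theorem re_trace_conjTranspose_sub_mul_sub {n : Type*} [Fintype n] (A B : Matrix n n ℂ) :
    ((A - B)ᴴ * (A - B)).trace.re
      = (Aᴴ * A).trace.re + (Bᴴ * B).trace.re - 2 * (Bᴴ * A).trace.re := by
  have h_cross : (Aᴴ * B).trace.re = (Bᴴ * A).trace.re := by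
    rw [← conjTranspose_conjTranspose A, ← conjTranspose_mul, trace_conjTranspose,
      conjTranspose_conjTranspose, Complex.star_def, Complex.conj_re]
  simp only [conjTranspose_sub, sub_mul, mul_sub, trace_sub, Complex.sub_re]
  linarith

theorem trace_blockEnc_sub_mul_transpose_of_unitary {n : ℕ} (T G : Matrix (Fin n) (Fin n) ℂ)
    (hT : Tᴴ * T = 1) (hG : Gᴴ * G = 1) :
    ((blockEnc G - blockEnc T) * (blockEnc G - blockEnc T)ᵀ).trace
      = 4 * n - 4 * (Tᴴ * G).trace.re := by
  rw [← blockEnc_sub, trace_blockEnc_mul_transpose, re_trace_conjTranspose_sub_mul_sub, hT, hG,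
    trace_one]
  simp only [Fintype.card_fin, Complex.natCast_re]
  ring

/-- with `E = R(G) - R(T̃)`, `α = Re((1/n)Tr(T̃†G))`,
`β = Im((1/n)Tr(T̃†G))` and `F = α² + β²`, one has
`F ≥ (1 - ‖E‖_F²/(4n))²`, with equality iff `β = 0`. -/
theorem fidelity_lower_bound {n : ℕ} (hn : 0 < n)
    (T G : Matrix (Fin n) (Fin n) ℂ)
    (hT : Tᴴ * T = 1) (hG : Gᴴ * G = 1) :
    (((1 / (n : ℝ)) * (Tᴴ * G).trace).re ^ 2 + ((1 / (n : ℝ)) * (Tᴴ * G).trace).im ^ 2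
        ≥ (1 - (((blockEnc G - blockEnc T) * (blockEnc G - blockEnc T)ᵀ).trace
              / (4 * (n : ℝ)))) ^ 2) ∧
    ((((1 / (n : ℝ)) * (Tᴴ * G).trace).re ^ 2 + ((1 / (n : ℝ)) * (Tᴴ * G).trace).im ^ 2
        = (1 - (((blockEnc G - blockEnc T) * (blockEnc G - blockEnc T)ᵀ).trace
              / (4 * (n : ℝ)))) ^ 2)
      ↔ ((1 / (n : ℝ)) * (Tᴴ * G).trace).im = 0) := by
  have h_alpha : 1 - ((blockEnc G - blockEnc T) * (blockEnc G - blockEnc T)ᵀ).trace / (4 * n)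
      = ((1 / (n : ℝ)) * (Tᴴ * G).trace).re := by
    have hn' : (n : ℝ) ≠ 0 := by positivity
    rw [trace_blockEnc_sub_mul_transpose_of_unitary T G hT hG, one_div_mul_eq_div,
      Complex.div_ofReal_re]
    field_simp
    ring
  rw [h_alpha, ge_iff_le, add_eq_left, sq_eq_zero_iff]
  exact ⟨le_add_of_nonneg_right (sq_nonneg _), Iff.rfl⟩
end

section
/- Let 𝔾 be a finite set of unitary complex n×n matrices, let T̃ be a unitary complex n×n matrix, and for each g ∈ 𝔾 write T̃·g† = A_g + i·B_g with A_g and B_g real n×n matrices (so every entry of T̃·g† has modulus at most 1). Let r, s be real numbers with r² + s² = 1, let z : 𝔾 → {0,1} be a selection with Σ_{g∈𝔾} z_g = 1, and let G be a unitary complex n×n matrix with all entries of modulus at most 1. Then the nonlinear condition G = (r + i·s)·Σ_{g∈𝔾} z_g·(T̃·g†) holds if and only if for every g ∈ 𝔾 and all indices i,j: |Re(G)_{ij} − (r·(A_g)_{ij} − s·(B_g)_{ij})| ≤ 2·(1 − z_g) and |Im(G)_{ij} − (r·(B_g)_{ij} + s·(A_g)_{ij})| ≤ 2·(1 − z_g).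 -/
/-!
Since `z` is one-hot, `z = Pi.single i₀ 1` and the sum collapses to `T * (g i₀)ᴴ`; the inequalities
for `i₀` have bound `0` and say exactly that `G` is the phase times this matrix. For `i ≠ i₀` the
bound `2` holds automatically, because `G` and the phase times `T * (g i)ᴴ` both have entries of
modulus at most `1`, being a unit phase times entries of unitary matrices.
-/

open Matrix

theorem Complex.re_ofReal_add_ofReal_mul_I_mul (r s : ℝ) (w : ℂ) :
    ((r + s * Complex.I) * w).re = r * w.re - s * w.im := by
  simp [Complex.mul_re]

theorem Complex.im_ofReal_add_ofReal_mul_I_mul (r s : ℝ) (w : ℂ) :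
    ((r + s * Complex.I) * w).im = r * w.im + s * w.re := by
  simp [Complex.mul_im]

theorem Complex.abs_re_sub_re_le_two {w x : ℂ} (hw : ‖w‖ ≤ 1) (hx : ‖x‖ ≤ 1) :
    |w.re - x.re| ≤ 2 := by
  rw [← Complex.sub_re]
  linarith [Complex.abs_re_le_norm (w - x), norm_sub_le w x]

theorem Complex.abs_im_sub_im_le_two {w x : ℂ} (hw : ‖w‖ ≤ 1) (hx : ‖x‖ ≤ 1) :
    |w.im - x.im| ≤ 2 := by
  rw [← Complex.sub_im]
  linarith [Complex.abs_im_le_norm (w - x), norm_sub_le w x]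

theorem Complex.abs_re_sub_re_nonpos_and_abs_im_sub_im_nonpos_iff {w x : ℂ} :
    |w.re - x.re| ≤ 0 ∧ |w.im - x.im| ≤ 0 ↔ w = x := by
  simp only [abs_nonpos_iff, sub_eq_zero, Complex.ext_iff]

theorem Matrix.mul_conjTranspose_mem_unitaryGroup {n α : Type*} [Fintype n] [DecidableEq n]
    [CommRing α] [StarRing α] {A B : Matrix n n α} (hA : Aᴴ * A = 1) (hB : B * Bᴴ = 1) :
    A * Bᴴ ∈ unitaryGroup n α := by
  rw [mem_unitaryGroup_iff', star_eq_conjTranspose, conjTranspose_mul, conjTranspose_conjTranspose,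
    Matrix.mul_assoc, ← Matrix.mul_assoc Aᴴ, hA, Matrix.one_mul, hB]

theorem exists_eq_pi_single_of_sum_eq_one {ι : Type*} [Fintype ι] [DecidableEq ι] {z : ι → ℝ}
    (hz : ∀ i, z i = 0 ∨ z i = 1) (hz1 : ∑ i, z i = 1) : ∃ i₀, z = Pi.single i₀ 1 := by
  obtain ⟨i₀, hi₀⟩ : ∃ i, z i = 1 := by
    by_contra! h
    simp [fun i => (hz i).resolve_right (h i)] at hz1
  have hrest : ∑ i ∈ Finset.univ.erase i₀, z i = 0 := by
    linarith [Finset.add_sum_erase Finset.univ z (Finset.mem_univ i₀)]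
  have hnonneg : ∀ i ∈ Finset.univ.erase i₀, 0 ≤ z i := fun i _ => by
    rcases hz i with h | h <;> simp [h]
  refine ⟨i₀, funext fun i => ?_⟩
  rcases eq_or_ne i i₀ with rfl | hi
  · simp [hi₀]
  · rw [Pi.single_eq_of_ne hi]
    exact (Finset.sum_eq_zero_iff_of_nonneg hnonneg).mp hrest i (by simp [hi])

theorem sum_pi_single_smul {ι M : Type*} [Fintype ι] [DecidableEq ι] [AddCommMonoid M] [Module ℂ M]
    (i₀ : ι) (f : ι → M) : ∑ i, ((Pi.single i₀ 1 : ι → ℝ) i : ℂ) • f i = f i₀ := by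
  simp [Pi.single_apply, apply_ite, ite_smul]

theorem hc1_global_phase_reformulation_general {n : ℕ} {ι : Type*} [Fintype ι]
    (g : ι → Matrix (Fin n) (Fin n) ℂ)
    (hg : ∀ i, (g i)ᴴ * g i = 1 ∧ g i * (g i)ᴴ = 1)
    (T : Matrix (Fin n) (Fin n) ℂ) (hT : Tᴴ * T = 1)
    (r s : ℝ) (hrs : r ^ 2 + s ^ 2 = 1)
    (z : ι → ℝ) (hz : ∀ i, z i = 0 ∨ z i = 1) (hz1 : ∑ i, z i = 1)
    (G : Matrix (Fin n) (Fin n) ℂ) :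
    G = ((r : ℂ) + s * Complex.I) • ∑ i, (z i : ℂ) • (T * (g i)ᴴ)
      ↔ ∀ i, ∀ a b : Fin n,
          |(G a b).re - (r * ((T * (g i)ᴴ) a b).re - s * ((T * (g i)ᴴ) a b).im)|
              ≤ 2 * (1 - z i) ∧
          |(G a b).im - (r * ((T * (g i)ᴴ) a b).im + s * ((T * (g i)ᴴ) a b).re)|
              ≤ 2 * (1 - z i) := by
  classical
  obtain ⟨i₀, rfl⟩ := exists_eq_pi_single_of_sum_eq_one hz hz1
  simp only [← Complex.re_ofReal_add_ofReal_mul_I_mul, ← Complex.im_ofReal_add_ofReal_mul_I_mul,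
    sum_pi_single_smul]
  set c : ℂ := r + s * Complex.I
  have hc : ‖c‖ = 1 := by rw [Complex.norm_add_mul_I, hrs, Real.sqrt_one]
  have hbound : ∀ i a b, ‖c * (T * (g i)ᴴ) a b‖ ≤ 1 := fun i a b => by
    rw [norm_mul, hc, one_mul]
    exact entry_norm_bound_of_unitary (mul_conjTranspose_mem_unitaryGroup hT (hg i).2) a b
  constructor
  · rintro rfl i a b
    rcases eq_or_ne i i₀ with rfl | hi
    · simp
    · rw [Pi.single_eq_of_ne hi, sub_zero, mul_one, Matrix.smul_apply, smul_eq_mul]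
      exact ⟨Complex.abs_re_sub_re_le_two (hbound _ _ _) (hbound _ _ _),
        Complex.abs_im_sub_im_le_two (hbound _ _ _) (hbound _ _ _)⟩
  · intro h
    ext a b
    have hab := h i₀ a b
    rw [Pi.single_eq_same, sub_self, mul_zero,
      Complex.abs_re_sub_re_nonpos_and_abs_im_sub_im_nonpos_iff] at hab
    simpa using hab

/-- Proposition on HC-1 with global phase: for a finite family
of unitary gates `g i`, a unitary target `T̃`, a unit-modulus phase `r + i·s`,
and a binary one-hot selection `z`, the nonlinear condition
`G = (r + i·s) · Σ_i z_i · (T̃ · (g i)†)` is equivalent to the element-wise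
linear inequalities with big-M constant `2·(1 - z_i)`. -/
theorem hc1_global_phase_reformulation {n : ℕ} {ι : Type*} [Fintype ι]
    (g : ι → Matrix (Fin n) (Fin n) ℂ)
    (hg : ∀ i, (g i)ᴴ * g i = 1 ∧ g i * (g i)ᴴ = 1)
    (T : Matrix (Fin n) (Fin n) ℂ) (hT : Tᴴ * T = 1)
    (r s : ℝ) (hrs : r ^ 2 + s ^ 2 = 1)
    (z : ι → ℝ) (hz : ∀ i, z i = 0 ∨ z i = 1) (hz1 : ∑ i, z i = 1)
    (G : Matrix (Fin n) (Fin n) ℂ) (hGu : Gᴴ * G = 1)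
    (hGbd : ∀ a b, ‖G a b‖ ≤ 1) :
    G = ((r : ℂ) + s * Complex.I) • ∑ i, (z i : ℂ) • (T * (g i)ᴴ)
      ↔ ∀ i, ∀ a b : Fin n,
          |(G a b).re - (r * ((T * (g i)ᴴ) a b).re - s * ((T * (g i)ᴴ) a b).im)|
              ≤ 2 * (1 - z i) ∧
          |(G a b).im - (r * ((T * (g i)ᴴ) a b).im + s * ((T * (g i)ᴴ) a b).re)|
              ≤ 2 * (1 - z i) :=
  hc1_global_phase_reformulation_general g hg T hT r s hrs z hz hz1 G
end
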